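/- arXiv:1303.7308 — 4 statements merged into one kernel-verified Lean document; each statement's English description precedes it below -/
import Mathlib

section
/- Let H be a complex Hilbert space and let E, F be effects on H. Suppose the infimum E ∧ F of E and F exists in the set of effects with the Loewner order (i.e., E ∧ F is an effect that is a lower bound of E and F and is greater than or equal to every effect that is a lower bound of both E and F). Then E and F are coexistent if and only if E ∧ F ≥ E + F − 1. -/
variable {H : Type*} [NormedAddCommGroup H] [InnerProductSpace ℂ H] [CompleteSpace H]

/-- An effect on a complex Hilbert space: an operator `E` with `0 ≤ E ≤ 1` in the Loewner order. -/
def IsEffect (E : H →L[ℂ] H) : Prop := 0 ≤ E ∧ E ≤ 1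

/-- Two effects `E` and `F` are coexistent if there are four effects `G₁₁, G₁₂, G₂₁, G₂₂` with
`G₁₁ + G₁₂ = E`, `G₁₁ + G₂₁ = F` and `G₁₁ + G₁₂ + G₂₁ + G₂₂ = 1`. -/
def Coexistent (E F : H →L[ℂ] H) : Prop :=
  ∃ G₁₁ G₁₂ G₂₁ G₂₂ : H →L[ℂ] H,
    IsEffect G₁₁ ∧ IsEffect G₁₂ ∧ IsEffect G₂₁ ∧ IsEffect G₂₂ ∧
    G₁₁ + G₁₂ = E ∧ G₁₁ + G₂₁ = F ∧ G₁₁ + G₁₂ + G₂₁ + G₂₂ = 1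

/-- `G` is the infimum of the effects `E` and `F` within the partially ordered set of effects. -/
def IsInfOfEffects (E F G : H →L[ℂ] H) : Prop :=
  IsEffect G ∧ G ≤ E ∧ G ≤ F ∧ ∀ C : H →L[ℂ] H, IsEffect C → C ≤ E → C ≤ F → C ≤ G

/-- The Loewner order on operators is characterised by positivity of the difference. -/
lemma clm_sub_nonneg {A B : H →L[ℂ] H} : A ≤ B ↔ 0 ≤ B - A := by
  rw [ContinuousLinearMap.le_def, ContinuousLinearMap.nonneg_iff_isPositive]

/-- Addition is monotone for the Loewner order. -/
lemma clm_add_le_add {A B C D : H →L[ℂ] H} (h₁ : A ≤ B) (h₂ : C ≤ D) : A + C ≤ B + D := by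
  rw [ContinuousLinearMap.le_def] at h₁ h₂ ⊢
  simpa [sub_add_sub_comm] using h₁.add h₂

/-- If the infimum E ∧ F of E and F exists in the set of effects, then E and F are coexistent
iff E ∧ F ≥ E + F - 1. -/
theorem coexistent_iff_inf_ge (E F G : H →L[ℂ] H) (hE : IsEffect E) (hF : IsEffect F)
    (hG : IsInfOfEffects E F G) :
    Coexistent E F ↔ E + F - 1 ≤ G := by
  obtain ⟨⟨hG0, hG1⟩, hGE, hGF, hGmax⟩ := hG
  constructor
  · rintro ⟨A, B, C, D, hA, hB, hC, hD, hABE, hACF, hsum⟩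
    -- A = E + F + D - 1 ≥ E + F - 1, and A ≤ E, A ≤ F, so A ≤ G.
    have hAE : A ≤ E := by
      rw [clm_sub_nonneg]
      have : E - A = B := by rw [← hABE]; abel
      rw [this]; exact hB.1
    have hAF : A ≤ F := by
      rw [clm_sub_nonneg]
      have : F - A = C := by rw [← hACF]; abel
      rw [this]; exact hC.1
    have hAeff : IsEffect A := hA
    have hAG : A ≤ G := hGmax A hAeff hAE hAF
    have hEF1A : E + F - 1 ≤ A := by
      rw [clm_sub_nonneg]
      have : A - (E + F - 1) = D := by
        rw [← hABE, ← hACF, ← hsum]; abel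
      rw [this]; exact hD.1
    exact hEF1A.trans hAG
  · intro h
    refine ⟨G, E - G, F - G, 1 - E - F + G, ⟨hG0, hG1⟩, ?_, ?_, ?_, by abel, by abel, by abel⟩
    · constructor
      · rw [← clm_sub_nonneg]; exact hGE
      · -- E - G ≤ 1 since E ≤ 1 and 0 ≤ G
        rw [clm_sub_nonneg] at *
        have := clm_add_le_add hE.2 hG0
        rw [clm_sub_nonneg] at this
        calc (0 : H →L[ℂ] H) ≤ 1 + (G - 0) - (E + 0) := this
          _ = 1 - (E - G) := by abel
    · constructor
      · rw [← clm_sub_nonneg]; exact hGF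
      · rw [clm_sub_nonneg] at *
        have := clm_add_le_add hF.2 hG0
        rw [clm_sub_nonneg] at this
        calc (0 : H →L[ℂ] H) ≤ 1 + (G - 0) - (F + 0) := this
          _ = 1 - (F - G) := by abel
    · constructor
      · rw [clm_sub_nonneg] at h
        calc (0 : H →L[ℂ] H) ≤ G - (E + F - 1) := h
          _ = 1 - E - F + G := by abel
      · -- 1 - E - F + G ≤ 1 ⟺ 0 ≤ E + F - G; G ≤ F ≤ E + F since 0 ≤ E
        have h1 : G ≤ E + F := by
          have := clm_add_le_add hE.1 hGF
          simpa using this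
        rw [clm_sub_nonneg] at h1 ⊢
        calc (0 : H →L[ℂ] H) ≤ E + F - G := h1
          _ = 1 - (1 - E - F + G) := by abel
end

section
/- Let H be a complex Hilbert space and let E, F be effects on H. If at least one of the following four conditions holds, then E and F are coexistent: (i) the infimum E ∧ F exists in the set of effects and E ∧ F ≥ E + F − 1; (ii) E ∧ (1−F) exists and E ∧ (1−F) ≥ E + (1−F) − 1; (iii) (1−E) ∧ F exists and (1−E) ∧ F ≥ (1−E) + F − 1; (iv) (1−E) ∧ (1−F) exists and (1−E) ∧ (1−F) ≥ (1−E) + (1−F) − 1. -/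
variable {H : Type*} [NormedAddCommGroup H] [InnerProductSpace ℂ H] [CompleteSpace H]

private lemma clm_le_iff (f g : H →L[ℂ] H) : f ≤ g ↔ (g - f).IsPositive :=
  ContinuousLinearMap.le_def f g

private lemma clm_le_of_eq_sub {a b c d : H →L[ℂ] H} (h : b - a = d - c) (hle : c ≤ d) :
    a ≤ b := by
  rw [clm_le_iff] at hle ⊢
  rwa [h]

private lemma effect_compl {A : H →L[ℂ] H} (hA : IsEffect A) : IsEffect (1 - A) := by
  constructor
  · exact clm_le_of_eq_sub (by abel) hA.2
  · exact clm_le_of_eq_sub (by abel) hA.1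

/-- The main construction: infimum condition gives coexistence directly. -/
private lemma coex_of_inf (E F : H →L[ℂ] H) (hE : IsEffect E) (hF : IsEffect F)
    (G : H →L[ℂ] H) (hG : IsInfOfEffects E F G) (hsum : E + F - 1 ≤ G) :
    Coexistent E F := by
  obtain ⟨hGe, hGE, hGF, -⟩ := hG
  refine ⟨G, E - G, F - G, 1 - E - F + G, hGe, ?_, ?_, ?_, by abel, by abel, by abel⟩
  · constructor
    · exact clm_le_of_eq_sub (by abel) hGE
    · exact le_trans (clm_le_of_eq_sub (a := E - G) (b := E) (by abel) hGe.1) hE.2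
  · constructor
    · exact clm_le_of_eq_sub (by abel) hGF
    · exact le_trans (clm_le_of_eq_sub (a := F - G) (b := F) (by abel) hGe.1) hF.2
  · constructor
    · exact clm_le_of_eq_sub (by abel) hsum
    · calc 1 - E - F + G ≤ 1 - E - F + F := clm_le_of_eq_sub (by abel) hGF
        _ = 1 - E := by abel
        _ ≤ 1 := clm_le_of_eq_sub (by abel) hE.1

private lemma coex_compl_right {E F : H →L[ℂ] H} (h : Coexistent E (1 - F)) :
    Coexistent E F := by
  obtain ⟨G₁₁, G₁₂, G₂₁, G₂₂, h₁₁, h₁₂, h₂₁, h₂₂, hrow, hcol, htot⟩ := h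
  refine ⟨G₁₂, G₁₁, G₂₂, G₂₁, h₁₂, h₁₁, h₂₂, h₂₁, by rw [← hrow]; abel, ?_, by
    rw [← htot]; abel⟩
  -- F = G₁₂ + G₂₂
  have : F = G₁₂ + G₂₂ := by
    have h1 : G₁₁ + G₂₁ = 1 - F := hcol
    have h2 : G₁₁ + G₁₂ + G₂₁ + G₂₂ = 1 := htot
    have : (G₁₁ + G₂₁) + (G₁₂ + G₂₂) = 1 := by rw [← h2]; abel
    rw [h1] at this
    have := eq_sub_of_add_eq' this
    rw [this]; abel
  rw [this]

private lemma coex_compl_left {E F : H →L[ℂ] H} (h : Coexistent (1 - E) F) :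
    Coexistent E F := by
  obtain ⟨G₁₁, G₁₂, G₂₁, G₂₂, h₁₁, h₁₂, h₂₁, h₂₂, hrow, hcol, htot⟩ := h
  refine ⟨G₂₁, G₂₂, G₁₁, G₁₂, h₂₁, h₂₂, h₁₁, h₁₂, ?_, by rw [← hcol]; abel, by
    rw [← htot]; abel⟩
  have : E = G₂₁ + G₂₂ := by
    have : (G₁₁ + G₁₂) + (G₂₁ + G₂₂) = 1 := by rw [← htot]; abel
    rw [hrow] at this
    have := eq_sub_of_add_eq' this
    rw [this]; abel
  rw [this]

/-- The (INF) sufficient condition for coexistence: if any of the four infima exists and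
dominates the corresponding sum minus identity, then E and F are coexistent. -/
theorem coexistent_of_inf_conditions (E F : H →L[ℂ] H) (hE : IsEffect E) (hF : IsEffect F)
    (h : (∃ G : H →L[ℂ] H, IsInfOfEffects E F G ∧ E + F - 1 ≤ G) ∨
         (∃ G : H →L[ℂ] H, IsInfOfEffects E (1 - F) G ∧ E + (1 - F) - 1 ≤ G) ∨
         (∃ G : H →L[ℂ] H, IsInfOfEffects (1 - E) F G ∧ (1 - E) + F - 1 ≤ G) ∨
         (∃ G : H →L[ℂ] H, IsInfOfEffects (1 - E) (1 - F) G ∧ (1 - E) + (1 - F) - 1 ≤ G)) :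
    Coexistent E F := by
  rcases h with ⟨G, hG, hs⟩ | ⟨G, hG, hs⟩ | ⟨G, hG, hs⟩ | ⟨G, hG, hs⟩
  · exact coex_of_inf E F hE hF G hG hs
  · exact coex_compl_right (coex_of_inf E (1 - F) hE (effect_compl hF) G hG hs)
  · exact coex_compl_left (coex_of_inf (1 - E) F (effect_compl hE) hF G hG hs)
  · exact coex_compl_left (coex_compl_right
      (coex_of_inf (1 - E) (1 - F) (effect_compl hE) (effect_compl hF) G hG hs))
end

section
/- Let H be a complex Hilbert space and let E, F be effects on H. If the four Jordan products E ∘ F, (1−E) ∘ F, E ∘ (1−F), and (1−E) ∘ (1−F) are all positive operators, then E and F are coexistent. -/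
variable {H : Type*} [NormedAddCommGroup H] [InnerProductSpace ℂ H] [CompleteSpace H]

/-- The Jordan product E ∘ F = ½(EF + FE). -/
noncomputable def jordan (E F : H →L[ℂ] H) : H →L[ℂ] H := (2 : ℂ)⁻¹ • (E * F + F * E)

lemma jordan_add_left (E F : H →L[ℂ] H) : jordan E F + jordan E (1 - F) = E := by
  unfold jordan
  rw [← smul_add]
  rw [show E * F + F * E + (E * (1 - F) + (1 - F) * E) = (2 : ℂ) • E by
    simp [mul_sub, sub_mul, two_smul]; abel]
  rw [smul_smul]
  norm_num

lemma jordan_add_right (E F : H →L[ℂ] H) : jordan E F + jordan (1 - E) F = F := by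
  unfold jordan
  rw [← smul_add]
  rw [show E * F + F * E + ((1 - E) * F + F * (1 - E)) = (2 : ℂ) • F by
    simp [mul_sub, sub_mul, two_smul]; abel]
  rw [smul_smul]
  norm_num

/-- The (JOR) condition: if all four Jordan products of E, 1-E with F, 1-F are positive,
then E and F are coexistent. -/
theorem coexistent_of_jordan_nonneg (E F : H →L[ℂ] H) (hE : IsEffect E) (hF : IsEffect F)
    (h₁ : 0 ≤ jordan E F) (h₂ : 0 ≤ jordan (1 - E) F)
    (h₃ : 0 ≤ jordan E (1 - F)) (h₄ : 0 ≤ jordan (1 - E) (1 - F)) :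
    Coexistent E F := by
  set A := jordan E F
  set B := jordan E (1 - F)
  set C := jordan (1 - E) F
  set D := jordan (1 - E) (1 - F)
  have hAB : A + B = E := jordan_add_left E F
  have hAC : A + C = F := jordan_add_right E F
  have hCD : C + D = 1 - E := jordan_add_left (1 - E) F
  have hBD : B + D = 1 - F := jordan_add_right E (1 - F)
  have htot : A + B + C + D = 1 := by
    have : (A + B) + (C + D) = E + (1 - E) := by rw [hAB, hCD]
    rw [show E + (1 - E) = 1 by abel] at this
    calc A + B + C + D = (A + B) + (C + D) := by abel
    _ = 1 := this
  have key : ∀ X Y Z W : H →L[ℂ] H, X + Y + Z + W = 1 →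
      0 ≤ Y → 0 ≤ Z → 0 ≤ W → X ≤ 1 := by
    intro X Y Z W h hY hZ hW
    have : X ≤ X + (Y + Z + W) := le_add_of_nonneg_right (by positivity)
    calc X ≤ X + (Y + Z + W) := this
    _ = X + Y + Z + W := by abel
    _ = 1 := h
  refine ⟨A, B, C, D, ⟨h₁, key A B C D htot h₃ h₂ h₄⟩,
    ⟨h₃, key B A C D (by rw [← htot]; abel) h₁ h₂ h₄⟩,
    ⟨h₂, key C A B D (by rw [← htot]; abel) h₁ h₃ h₄⟩,
    ⟨h₄, key D A B C (by rw [← htot]; abel) h₁ h₃ h₂⟩,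
    hAB, hAC, htot⟩
end

section
/- For j = 1, 2, 3 let e_j ∈ ℝ³ with ‖e_j‖ ≤ 1 and the vectors e₁, e₂, e₃ pairwise orthogonal, and define qubit effects E_j = ½(1 + e_j · σ) on ℂ², where e · σ = e₁σ_x + e₂σ_y + e₃σ_z with the Pauli matrices σ_x, σ_y, σ_z. If ‖e₁‖² + ‖e₂‖² + ‖e₃‖² ≤ 1, then E₁, E₂, E₃ are coexistent. -/
open Matrix ComplexOrder

/-- `e · σ = e₁σ_x + e₂σ_y + e₃σ_z` for `e ∈ ℝ³` and the Pauli matrices. -/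
noncomputable def dotSigma (e : EuclideanSpace ℝ (Fin 3)) : Matrix (Fin 2) (Fin 2) ℂ :=
  (e 0 : ℂ) • !![0, 1; 1, 0] + (e 1 : ℂ) • !![0, -Complex.I; Complex.I, 0] +
    (e 2 : ℂ) • !![1, 0; 0, -1]

/-- A qubit effect: a 2×2 matrix `A` with `0 ≤ A ≤ 1` in the Loewner order. -/
def MatIsEffect (A : Matrix (Fin 2) (Fin 2) ℂ) : Prop := A.PosSemidef ∧ (1 - A).PosSemidef

/-! With the sign `+` for `i_k = 1` and `-` otherwise, take `G_i = ⅛ (1 + (Σ_k ±e_k) · σ)`.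
By orthogonality `‖Σ_k ±e_k‖² = Σ_k ‖e_k‖² ≤ 1`, and `a + w · σ` is an effect as soon as
`‖w‖ ≤ a ≤ 1 - ‖w‖` (its eigenvalues are `a ± ‖w‖`), so every `G_i` is an effect. Summing over
the outcomes with `i_k = 1`, the signs of the `e_l` with `l ≠ k` cancel in pairs (flip `i_l`),
which leaves `½ (1 + e_k · σ)`. -/

section Pauli

theorem dotSigma_add (e f : EuclideanSpace ℝ (Fin 3)) :
    dotSigma (e + f) = dotSigma e + dotSigma f := by
  simp only [dotSigma, PiLp.add_apply, Complex.ofReal_add, add_smul]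
  abel

theorem dotSigma_smul (c : ℝ) (e : EuclideanSpace ℝ (Fin 3)) :
    dotSigma (c • e) = c • dotSigma e := by
  simp only [dotSigma, PiLp.smul_apply, smul_eq_mul, Complex.ofReal_mul, mul_smul, smul_add,
    Complex.coe_smul]

noncomputable def dotSigmaLinearMap : EuclideanSpace ℝ (Fin 3) →ₗ[ℝ] Matrix (Fin 2) (Fin 2) ℂ where
  toFun := dotSigma
  map_add' := dotSigma_add
  map_smul' := dotSigma_smul

theorem dotSigma_zero : dotSigma 0 = 0 := map_zero dotSigmaLinearMap

theorem dotSigma_neg (e : EuclideanSpace ℝ (Fin 3)) : dotSigma (-e) = -dotSigma e :=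
  map_neg dotSigmaLinearMap e

theorem dotSigma_sum {ι : Type*} (s : Finset ι) (e : ι → EuclideanSpace ℝ (Fin 3)) :
    dotSigma (∑ i ∈ s, e i) = ∑ i ∈ s, dotSigma (e i) :=
  map_sum dotSigmaLinearMap e s

theorem isHermitian_dotSigma (e : EuclideanSpace ℝ (Fin 3)) : (dotSigma e).IsHermitian := by
  ext i j
  fin_cases i <;> fin_cases j <;> simp [dotSigma]

theorem dotSigma_mul_self (e : EuclideanSpace ℝ (Fin 3)) :
    dotSigma e * dotSigma e = ‖e‖ ^ 2 • (1 : Matrix (Fin 2) (Fin 2) ℂ) := by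
  rw [EuclideanSpace.real_norm_sq_eq, Fin.sum_univ_three]
  ext i j
  fin_cases i <;> fin_cases j <;> simp [dotSigma, Matrix.mul_apply] <;> ring_nf <;>
    simp only [Complex.I_sq] <;> ring

theorem posSemidef_smul_one_add_dotSigma {e : EuclideanSpace ℝ (Fin 3)} {t : ℝ} (h : ‖e‖ ≤ t) :
    (t • 1 + dotSigma e).PosSemidef := by
  obtain he | he := (norm_nonneg e).eq_or_lt
  · rw [norm_eq_zero.mp he.symm, dotSigma_zero, add_zero]
    exact PosSemidef.one.smul (he.trans_le h)
  set A := ‖e‖ • (1 : Matrix (Fin 2) (Fin 2) ℂ) + dotSigma e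
  have hA : A = (2 * ‖e‖)⁻¹ • (Aᴴ * A) := by
    have hAA : Aᴴ * A = (2 * ‖e‖) • A := by
      have hAH : Aᴴ = A := by simp [A, (isHermitian_dotSigma e).eq]
      rw [hAH]
      simp only [A, add_mul, mul_add, dotSigma_mul_self, smul_mul_smul, Matrix.one_mul,
        Matrix.mul_one, Matrix.mul_smul, Matrix.smul_mul]
      module
    rw [hAA, smul_smul, inv_mul_cancel₀ (by positivity), one_smul]
  have : t • (1 : Matrix (Fin 2) (Fin 2) ℂ) + dotSigma e = (t - ‖e‖) • 1 + A := by
    simp only [A, sub_smul]; abel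
  rw [this, hA]
  exact (PosSemidef.one.smul (sub_nonneg.mpr h)).add
    ((posSemidef_conjTranspose_mul_self A).smul (by positivity))

theorem matIsEffect_smul_one_add_dotSigma {e : EuclideanSpace ℝ (Fin 3)} {a : ℝ}
    (h₀ : ‖e‖ ≤ a) (h₁ : a + ‖e‖ ≤ 1) : MatIsEffect (a • 1 + dotSigma e) := by
  refine ⟨posSemidef_smul_one_add_dotSigma h₀, ?_⟩
  have : 1 - (a • 1 + dotSigma e) = (1 - a) • 1 + dotSigma (-e) := by
    rw [dotSigma_neg, sub_smul, one_smul]; abel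
  rw [this]
  exact posSemidef_smul_one_add_dotSigma (by rw [norm_neg]; linarith)

end Pauli

open Finset

section SignedSum

variable {ι : Type*}

theorem sum_ite_neg_eq_zero_of_update_mem [DecidableEq ι] {E : Type*} [AddCommGroup E]
    {s : Finset (ι → Bool)} {l : ι} (hs : ∀ i ∈ s, Function.update i l (!i l) ∈ s) (x : E) :
    ∑ i ∈ s, (if i l then x else -x) = 0 :=
  sum_involution (fun i _ => Function.update i l (!i l))
    (fun i _ => by cases i l <;> simp)
    (fun i _ _ h => by simpa using congr_fun h l)
    hs (fun i _ => by simp)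

variable [Fintype ι]

theorem norm_sum_sq_of_pairwise_inner_eq_zero {F : Type*} [NormedAddCommGroup F]
    [InnerProductSpace ℝ F] {v : ι → F} (hv : Pairwise fun j l => inner ℝ (v j) (v l) = 0) :
    ‖∑ k, v k‖ ^ 2 = ∑ k, ‖v k‖ ^ 2 := by
  simp only [← real_inner_self_eq_norm_sq, sum_inner, inner_sum]
  refine sum_congr rfl fun j _ => sum_eq_single j (fun l _ hlj => hv hlj) ?_
  simp

def signedSum {E : Type*} [AddCommGroup E] (v : ι → E) (i : ι → Bool) : E :=
  ∑ k, if i k then v k else -v k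

theorem norm_signedSum_sq {F : Type*} [NormedAddCommGroup F] [InnerProductSpace ℝ F] {v : ι → F}
    (hv : Pairwise fun j l => inner ℝ (v j) (v l) = 0) (i : ι → Bool) :
    ‖signedSum v i‖ ^ 2 = ∑ k, ‖v k‖ ^ 2 := by
  rw [signedSum, norm_sum_sq_of_pairwise_inner_eq_zero]
  · congr 1 with k
    split_ifs <;> simp
  · intro j l hjl
    split_ifs <;> simp [hv hjl]

variable [DecidableEq ι] {E : Type*} [AddCommGroup E]

theorem sum_signedSum (v : ι → E) : ∑ i, signedSum v i = 0 := by
  simp only [signedSum]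
  rw [sum_comm]
  exact sum_eq_zero fun k _ => sum_ite_neg_eq_zero_of_update_mem (by simp) (v k)

theorem sum_filter_signedSum (v : ι → E) (k : ι) :
    ∑ i with i k = true, signedSum v i = #{i : ι → Bool | i k = true} • v k := by
  simp only [signedSum]
  rw [sum_comm, sum_eq_single k]
  · exact (sum_congr rfl fun i hi => if_pos (mem_filter.mp hi).2).trans (sum_const _)
  · exact fun l _ hlk => sum_ite_neg_eq_zero_of_update_mem
      (fun i hi => by simpa [Function.update_of_ne hlk.symm] using hi) (v l)
  · simp

end SignedSum

theorem coexistent_of_orthogonal_triple_general (v : Fin 3 → EuclideanSpace ℝ (Fin 3))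
    (horth : ∀ j l, j ≠ l → inner ℝ (v j) (v l) = (0 : ℝ))
    (hsum : ‖v 0‖ ^ 2 + ‖v 1‖ ^ 2 + ‖v 2‖ ^ 2 ≤ 1) :
    ∃ G : (Fin 3 → Bool) → Matrix (Fin 2) (Fin 2) ℂ,
      (∀ i, MatIsEffect (G i)) ∧ (∑ i, G i = 1) ∧
      ∀ k : Fin 3,
        ∑ i ∈ Finset.univ.filter (fun i : Fin 3 → Bool => i k = true), G i =
          (2 : ℂ)⁻¹ • (1 + dotSigma (v k)) := by
  have hw (i : Fin 3 → Bool) : ‖signedSum v i‖ ≤ 1 := by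
    have := norm_signedSum_sq horth i
    rw [Fin.sum_univ_three] at this
    exact (pow_le_one_iff_of_nonneg (norm_nonneg _) two_ne_zero).mp (this ▸ hsum)
  refine ⟨fun i => (8 : ℝ)⁻¹ • 1 + dotSigma ((8 : ℝ)⁻¹ • signedSum v i), fun i => ?_, ?_,
    fun k => ?_⟩
  · have h8 : ‖(8 : ℝ)⁻¹ • signedSum v i‖ ≤ 8⁻¹ := by
      rw [norm_smul, Real.norm_of_nonneg (by norm_num)]
      exact mul_le_of_le_one_right (by norm_num) (hw i)
    exact matIsEffect_smul_one_add_dotSigma h8 (by linarith)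
  · rw [sum_add_distrib, sum_const, card_univ, ← dotSigma_sum, ← smul_sum, sum_signedSum,
      smul_zero, dotSigma_zero, add_zero, Fintype.card_fun, Fintype.card_bool, Fintype.card_fin]
    module
  · have hcard : #{i : Fin 3 → Bool | i k = true} = 4 := by revert k; decide
    rw [sum_add_distrib, sum_const, ← dotSigma_sum, ← smul_sum, sum_filter_signedSum, hcard,
      ← Nat.cast_smul_eq_nsmul ℝ 4 (v k), smul_smul, dotSigma_smul]
    module

/-- For pairwise orthogonal vectors e₁, e₂, e₃ of norm at most one with
‖e₁‖² + ‖e₂‖² + ‖e₃‖² ≤ 1, the qubit effects E_j = ½(1 + e_j · σ) are coexistent. -/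
theorem coexistent_of_orthogonal_triple (v : Fin 3 → EuclideanSpace ℝ (Fin 3))
    (hnorm : ∀ j, ‖v j‖ ≤ 1)
    (horth : ∀ j l, j ≠ l → inner ℝ (v j) (v l) = (0 : ℝ))
    (hsum : ‖v 0‖ ^ 2 + ‖v 1‖ ^ 2 + ‖v 2‖ ^ 2 ≤ 1) :
    ∃ G : (Fin 3 → Bool) → Matrix (Fin 2) (Fin 2) ℂ,
      (∀ i, MatIsEffect (G i)) ∧ (∑ i, G i = 1) ∧
      ∀ k : Fin 3,
        ∑ i ∈ Finset.univ.filter (fun i : Fin 3 → Bool => i k = true), G i =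
          (2 : ℂ)⁻¹ • (1 + dotSigma (v k)) :=
  coexistent_of_orthogonal_triple_general v horth hsum
end
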